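/- (Worst approximate max-following policy competes with best fixed policy.) In a finite episodic MDP with rewards in [0,1] and horizon H, let Π^k = {π^1,...,π^K} be K policies and let β ≥ 0. Then every β-approximate max-following policy π (i.e., a policy that at every time h and state s takes the action π^t_h(s) of some constituent π^t with V_h^t(s) ≥ max_k V_h^k(s) − β) satisfies E_{s₀∼μ₀}[V₀^π(s₀)] ≥ max_{k∈[K]} E_{s₀∼μ₀}[V₀^k(s₀)] − H·β. -/
import Mathlib


/-- Time-indexed value function `V_h^π` in a finite episodic MDP. -/
noncomputable def val {S A : Type} [Fintype S] (R : S → A → ℝ) (P : S → A → S → ℝ)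
    (H : ℕ) (π : ℕ → S → A) : ℕ → S → ℝ
  | h, s =>
    if h < H then
      R s (π h s) + ∑ s' : S, P s (π h s) s' * val R P H π (h + 1) s'
    else 0
termination_by h _ => H - h
decreasing_by omega

/-- worst approximate max-following policy competes with best fixed
policy: in a finite episodic MDP with rewards in `[0,1]` and horizon `H`, if `π` is a
`β`-approximate max-following policy over constituents `π¹,…,π^K` (at every time `h`
and state `s` it takes the action of some constituent `π^t` with
`V_h^t(s) ≥ max_k V_h^k(s) − β`), then
`E_{s₀∼μ₀}[V₀^π(s₀)] ≥ max_k E_{s₀∼μ₀}[V₀^k(s₀)] − H⋅β`. -/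
theorem approx_max_following_competes {S A : Type} [Fintype S]
    (R : S → A → ℝ) (P : S → A → S → ℝ) (μ0 : S → ℝ)
    (hR : ∀ s a, 0 ≤ R s a ∧ R s a ≤ 1)
    (hμ0 : ∀ s, 0 ≤ μ0 s) (hμ0sum : ∑ s : S, μ0 s = 1)
    (hPnonneg : ∀ s a s', 0 ≤ P s a s') (hPsum : ∀ s a, ∑ s' : S, P s a s' = 1)
    (H K : ℕ) (πc : Fin K → ℕ → S → A) (β : ℝ) (hβ : 0 ≤ β)
    (π : ℕ → S → A)
    (hmf : ∀ h, h < H → ∀ s, ∃ t : Fin K, π h s = πc t h s ∧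
      ∀ k : Fin K, val R P H (πc k) h s - β ≤ val R P H (πc t) h s) :
    ∀ k : Fin K,
      ∑ s : S, μ0 s * val R P H π 0 s ≥
        ∑ s : S, μ0 s * val R P H (πc k) 0 s - H * β := by
  have key : ∀ d h, H = h + d → ∀ s (k : Fin K),
      val R P H (πc k) h s - (d : ℝ) * β ≤ val R P H π h s := by
    intro d
    induction d with
    | zero =>
      intro h hH s k
      have hh : ¬ h < H := by omega
      rw [val, val]
      simp [hh]
    | succ d ih =>
      intro h hH s k
      have hh : h < H := by omega
      obtain ⟨t, hts, ht⟩ := hmf h hh s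
      have step : val R P H (πc t) h s - (d : ℝ) * β ≤ val R P H π h s := by
        rw [show val R P H π h s = R s (π h s) +
            ∑ s' : S, P s (π h s) s' * val R P H π (h + 1) s' from by rw [val]; simp [hh]]
        rw [show val R P H (πc t) h s = R s (πc t h s) +
            ∑ s' : S, P s (πc t h s) s' * val R P H (πc t) (h + 1) s' from by
          rw [val]; simp [hh]]
        rw [hts]
        have hsum : ∑ s' : S, P s (πc t h s) s' * (val R P H (πc t) (h + 1) s' - (d : ℝ) * β)
            ≤ ∑ s' : S, P s (πc t h s) s' * val R P H π (h + 1) s' := by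
          apply Finset.sum_le_sum
          intro s' _
          exact mul_le_mul_of_nonneg_left (ih (h + 1) (by omega) s' t)
            (hPnonneg s (πc t h s) s')
        have hexp : ∑ s' : S, P s (πc t h s) s' * (val R P H (πc t) (h + 1) s' - (d : ℝ) * β)
            = (∑ s' : S, P s (πc t h s) s' * val R P H (πc t) (h + 1) s') - (d : ℝ) * β := by
          simp only [mul_sub]
          rw [Finset.sum_sub_distrib, ← Finset.sum_mul, hPsum, one_mul]
        linarith [hsum, hexp.symm.le]
      have := ht k
      push_cast
      linarith
  intro k
  have h0 : ∀ s, val R P H (πc k) 0 s - (H : ℝ) * β ≤ val R P H π 0 s := by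
    intro s
    exact key H 0 (by omega) s k
  have : ∑ s : S, μ0 s * (val R P H (πc k) 0 s - (H : ℝ) * β)
      ≤ ∑ s : S, μ0 s * val R P H π 0 s :=
    Finset.sum_le_sum fun s _ => mul_le_mul_of_nonneg_left (h0 s) (hμ0 s)
  have hexp : ∑ s : S, μ0 s * (val R P H (πc k) 0 s - (H : ℝ) * β)
      = (∑ s : S, μ0 s * val R P H (πc k) 0 s) - (H : ℝ) * β := by
    simp only [mul_sub]
    rw [Finset.sum_sub_distrib, ← Finset.sum_mul, hμ0sum, one_mul]
  linarith
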